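/- In the proof of Proposition 3 (laver-to-simpson): given blocks B and C with ∪C ⊆ ∪B, the set C' = {t ∈ C | ∃ s ∈ B, s ⊏ t} ∪ {s ∪ {n} | s ∈ B, ∃ t ∈ C with t ⊑ s ⊂ ∪C, and n ∈ ∪C with n > max s} is a block with ∪C' = ∪C, and moreover C' ≤̇ B with B ∩ C' = ∅ (hence C' <̇ B). -/
import Mathlib


/-- `s` is a finite initial segment of the infinite set `X ⊆ ℕ`. -/
def IsInitSeg (s : Finset ℕ) (X : Set ℕ) : Prop :=
  ↑s ⊆ X ∧ ∀ x ∈ X, x ∉ s → ∀ y ∈ s, y < x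

/-- `s ⊑ t`: `s` is an initial segment of the finite set `t` (possibly `s = t`). -/
def FinInitSeg (s t : Finset ℕ) : Prop :=
  s ⊆ t ∧ ∀ x ∈ t, x ∉ s → ∀ y ∈ s, y < x

/-- `X⁻`: remove the least element of `X`. -/
def minus (X : Set ℕ) : Set ℕ := X \ {sInf X}

/-- `[V]^ω`: infinite subsets of `V`. -/
def InfSub (V : Set ℕ) : Set (Set ℕ) := {X | X ⊆ V ∧ X.Infinite}

/-- Continuity of `f` on `[V]^ω`. -/
def ContOn {Q : Type*} (V : Set ℕ) (f : Set ℕ → Q) : Prop :=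
  ∀ X ∈ InfSub V, ∃ s : Finset ℕ, IsInitSeg s X ∧
    ∀ Y ∈ InfSub V, IsInitSeg s Y → f Y = f X

/-- `f` is `R`-bad on `[V]^ω`. -/
def BadOn {Q : Type*} (R : Q → Q → Prop) (V : Set ℕ) (f : Set ℕ → Q) : Prop :=
  ¬ ∃ X ∈ InfSub V, R (f X) (f (minus X))

/-- The base `∪B` of a set of finite sets. -/
def blockBase (B : Set (Finset ℕ)) : Set ℕ := ⋃ t ∈ B, (↑t : Set ℕ)

/-- `B` is a block: nonempty finite sets, infinite base, and every infinite
subset of the base has a unique initial segment in `B`. -/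
def IsBlock (B : Set (Finset ℕ)) : Prop :=
  (∀ t ∈ B, t.Nonempty) ∧ (blockBase B).Infinite ∧
    ∀ X ∈ InfSub (blockBase B), ∃! s, s ∈ B ∧ IsInitSeg s X

/-- `B ≤̇ C` for blocks. -/
def LeDot (B C : Set (Finset ℕ)) : Prop :=
  blockBase B ⊆ blockBase C ∧ ∀ t ∈ B, ∃ s ∈ C, FinInitSeg s t

/-- `B <̇ C` for blocks. -/
def LtDot (B C : Set (Finset ℕ)) : Prop := LeDot B C ∧ ¬ B ⊆ C

/-- `E(C,B,n)`. -/
def Eset (C B : Set (Finset ℕ)) (n : ℕ) : Set (Finset ℕ) :=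
  {t | t ∈ B ∧ ↑t ⊆ Set.Iic n ∪ blockBase C ∧ ¬ (↑t : Set ℕ) ⊆ blockBase C}

/-- `M(C,B)`. -/
def Mset (C B : Set (Finset ℕ)) : Set ℕ :=
  {n | ∃ t ∈ B, (↑t : Set ℕ) ⊆ blockBase C ∧ t ∉ C ∧ n ∈ t ∧ ∀ x ∈ t, x ≤ n}

/-- `m(C,B)`. -/
noncomputable def mMin (C B : Set (Finset ℕ)) : ℕ := sInf (Mset C B)

/-- `s ◁ t` relative to the block `B`: some `X ∈ [∪B]^ω` has `s ⊏ X` and `t ⊏ X⁻`. -/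
def Tri (B : Set (Finset ℕ)) (s t : Finset ℕ) : Prop :=
  ∃ X ∈ InfSub (blockBase B), IsInitSeg s X ∧ IsInitSeg t (minus X)

/-- `f : B → Q` is `R`-bad (as an array on the block `B`). -/
def BadBlk {Q : Type*} (R : Q → Q → Prop) (B : Set (Finset ℕ)) (f : Finset ℕ → Q) : Prop :=
  ¬ ∃ s ∈ B, ∃ t ∈ B, Tri B s t ∧ R (f s) (f t)

/-- `f ≤̇' g` for arrays `f : B → Q` and `g : C → Q`. -/
def ArrLeDot {Q : Type*} (le' : Q → Q → Prop) (f : Finset ℕ → Q) (B : Set (Finset ℕ))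
    (g : Finset ℕ → Q) (C : Set (Finset ℕ)) : Prop :=
  LeDot B C ∧ (∀ t ∈ B ∩ C, f t = g t) ∧
    ∀ s ∈ C, ∀ t ∈ B, FinInitSeg s t → s ≠ t → le' (f t) (g s) ∧ f t ≠ g s

/-- `f <̇' g` for arrays on blocks. -/
def ArrLtDot {Q : Type*} (le' : Q → Q → Prop) (f : Finset ℕ → Q) (B : Set (Finset ℕ))
    (g : Finset ℕ → Q) (C : Set (Finset ℕ)) : Prop :=
  ArrLeDot le' f B g C ∧ ¬ B ⊆ C

/-- The block `C'` from the proof of Proposition `laver-to-simpson`. -/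
def Cprime (B C : Set (Finset ℕ)) : Set (Finset ℕ) :=
  {t | t ∈ C ∧ ∃ s ∈ B, FinInitSeg s t ∧ s ≠ t} ∪
  {t | ∃ s ∈ B, ∃ n ∈ blockBase C, (∃ t' ∈ C, FinInitSeg t' s) ∧
      (↑s : Set ℕ) ⊆ blockBase C ∧ (∀ x ∈ s, x < n) ∧ t = insert n s}

lemma mem_blockBase_of_mem {B : Set (Finset ℕ)} {t : Finset ℕ} (ht : t ∈ B) :
    (↑t : Set ℕ) ⊆ blockBase B := fun n hn => Set.mem_biUnion ht hn

lemma finInitSeg_trans_isInitSeg {s t : Finset ℕ} {X : Set ℕ}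
    (hst : FinInitSeg s t) (htX : IsInitSeg t X) : IsInitSeg s X := by
  refine ⟨fun x hx => htX.1 (hst.1 hx), fun x hx hxs y hy => ?_⟩
  by_cases hxt : x ∈ t
  · exact hst.2 x hxt hxs y hy
  · exact htX.2 x hx hxt y (hst.1 hy)

lemma isInitSeg_comparable {s t : Finset ℕ} {X : Set ℕ}
    (hs : IsInitSeg s X) (ht : IsInitSeg t X) : FinInitSeg s t ∨ FinInitSeg t s := by
  have hsub : s ⊆ t ∨ t ⊆ s := by
    by_contra h
    push_neg at h
    obtain ⟨x, hxs, hxt⟩ := Finset.not_subset.mp h.1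
    obtain ⟨y, hyt, hys⟩ := Finset.not_subset.mp h.2
    have h1 := ht.2 x (hs.1 hxs) hxt y hyt
    have h2 := hs.2 y (ht.1 hyt) hys x hxs
    omega
  rcases hsub with h | h
  · exact Or.inl ⟨h, fun x hxt hxs y hy => hs.2 x (ht.1 hxt) hxs y hy⟩
  · exact Or.inr ⟨h, fun x hxs hxt y hy => ht.2 x (hs.1 hxs) hxt y hy⟩

lemma finInitSeg_insert {s : Finset ℕ} {n : ℕ} (h : ∀ x ∈ s, x < n) :
    FinInitSeg s (insert n s) := by
  refine ⟨Finset.subset_insert _ _, fun x hx hxs y hy => ?_⟩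
  rcases Finset.mem_insert.mp hx with rfl | hx'
  · exact h y hy
  · exact absurd hx' hxs

lemma block_antichain {B : Set (Finset ℕ)} (hB : IsBlock B) {s t : Finset ℕ}
    (hs : s ∈ B) (ht : t ∈ B) (hst : FinInitSeg s t) : s = t := by
  set X : Set ℕ := ↑t ∪ {m | m ∈ blockBase B ∧ ∀ x ∈ t, x < m} with hXdef
  have hXsub : X ⊆ blockBase B := by
    rintro x (hx | hx)
    · exact mem_blockBase_of_mem ht hx
    · exact hx.1
  have hXinf : X.Infinite := by
    have hmono : blockBase B \ Set.Iio (t.sup id + 1) ⊆ X := by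
      rintro m ⟨hm1, hm2⟩
      simp only [Set.mem_Iio, not_lt] at hm2
      exact Or.inr ⟨hm1, fun x hx => lt_of_le_of_lt (Finset.le_sup (f := id) hx)
        (by omega)⟩
    exact ((hB.2.1.diff (Set.finite_Iio _)).mono hmono)
  have htX : IsInitSeg t X := by
    refine ⟨fun x hx => Or.inl hx, fun x hx hxt y hy => ?_⟩
    rcases hx with hx | hx
    · exact absurd hx hxt
    · exact hx.2 y hy
  have hsX : IsInitSeg s X := finInitSeg_trans_isInitSeg hst htX
  obtain ⟨u, _, huniq⟩ := hB.2.2 X ⟨hXsub, hXinf⟩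
  rw [huniq s ⟨hs, hsX⟩, huniq t ⟨ht, htX⟩]

lemma initSeg_insert_next {s : Finset ℕ} {X : Set ℕ} (hX : X.Infinite)
    (hs : IsInitSeg s X) :
    sInf (X \ ↑s) ∈ X ∧ sInf (X \ ↑s) ∉ s ∧ (∀ x ∈ s, x < sInf (X \ ↑s)) ∧
      IsInitSeg (insert (sInf (X \ ↑s)) s) X := by
  have hne : (X \ ↑s).Nonempty := (hX.diff s.finite_toSet).nonempty
  have hmem : sInf (X \ ↑s) ∈ X \ ↑s := Nat.sInf_mem hne
  set n := sInf (X \ ↑s)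
  have hnX : n ∈ X := hmem.1
  have hns : n ∉ s := fun h => hmem.2 h
  have hlt : ∀ x ∈ s, x < n := hs.2 n hnX hns
  refine ⟨hnX, hns, hlt, ?_, ?_⟩
  · intro x hx
    rcases Finset.mem_insert.mp hx with rfl | hx'
    · exact hnX
    · exact hs.1 hx'
  · intro x hx hxi y hy
    have hxs : x ∉ s := fun h => hxi (Finset.mem_insert_of_mem h)
    have hxn : x ≠ n := fun h => hxi (h ▸ Finset.mem_insert_self _ _)
    have hnx : n ≤ x := Nat.sInf_le ⟨hx, hxs⟩
    rcases Finset.mem_insert.mp hy with rfl | hy'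
    · omega
    · exact hs.2 x hx hxs y hy'

/-- Characterization of members of `Cprime B C` that are initial segments of `X`. -/
lemma cprime_char {B C : Set (Finset ℕ)} (hB : IsBlock B) (hC : IsBlock C)
    {X : Set ℕ} (hXB : X ∈ InfSub (blockBase B)) (hXC : X ∈ InfSub (blockBase C))
    {s t u : Finset ℕ}
    (hsB : s ∈ B) (hsX : IsInitSeg s X) (htC : t ∈ C) (htX : IsInitSeg t X)
    (hu : u ∈ Cprime B C) (huX : IsInitSeg u X) :
    (u = t ∧ FinInitSeg s t ∧ s ≠ t) ∨ (u = insert (sInf (X \ ↑s)) s ∧ FinInitSeg t s) := by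
  have uniqB : ∀ v ∈ B, IsInitSeg v X → v = s := by
    obtain ⟨w, _, hw⟩ := hB.2.2 X hXB
    intro v hv hvX
    rw [hw v ⟨hv, hvX⟩, ← hw s ⟨hsB, hsX⟩]
  have uniqC : ∀ v ∈ C, IsInitSeg v X → v = t := by
    obtain ⟨w, _, hw⟩ := hC.2.2 X hXC
    intro v hv hvX
    rw [hw v ⟨hv, hvX⟩, ← hw t ⟨htC, htX⟩]
  rcases hu with ⟨huC, s', hs'B, hs'u, hs'ne⟩ | ⟨s', hs'B, n, hnC, ⟨t', ht'C, ht's'⟩, hs'sub, hlt, rfl⟩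
  · have hut : u = t := uniqC u huC huX
    have hs's : s' = s := uniqB s' hs'B (finInitSeg_trans_isInitSeg hs'u huX)
    subst hut; subst hs's
    exact Or.inl ⟨rfl, hs'u, hs'ne⟩
  · have hs'X : IsInitSeg s' X := finInitSeg_trans_isInitSeg (finInitSeg_insert hlt) huX
    have hs's : s' = s := uniqB s' hs'B hs'X
    subst hs's
    have ht't : t' = t := uniqC t' ht'C (finInitSeg_trans_isInitSeg ht's' hs'X)
    subst ht't
    have hnmem : n ∈ X \ ↑s' := by
      refine ⟨huX.1 (by simp), fun h => ?_⟩
      exact absurd (hlt n h) (lt_irrefl n)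
    have hnle : ∀ m ∈ X \ ↑s', n ≤ m := by
      rintro m ⟨hmX, hms⟩
      by_contra hmn
      push_neg at hmn
      by_cases hmu : m ∈ insert n s'
      · rcases Finset.mem_insert.mp hmu with rfl | hm'
        · omega
        · exact hms hm'
      · have := huX.2 m hmX hmu n (Finset.mem_insert_self _ _)
        omega
    have : n = sInf (X \ ↑s') := le_antisymm (le_csInf ⟨n, hnmem⟩ hnle) (Nat.sInf_le hnmem)
    exact Or.inr ⟨by rw [← this], ht's'⟩

/-- Existence of an initial segment of `X` inside `Cprime B C`. -/
lemma cprime_exists {B C : Set (Finset ℕ)} (hB : IsBlock B) (hC : IsBlock C)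
    (hsub : blockBase C ⊆ blockBase B)
    {X : Set ℕ} (hXC : X ∈ InfSub (blockBase C)) :
    ∃ u ∈ Cprime B C, IsInitSeg u X := by
  have hXB : X ∈ InfSub (blockBase B) := ⟨hXC.1.trans hsub, hXC.2⟩
  obtain ⟨s, ⟨hsB, hsX⟩, _⟩ := hB.2.2 X hXB
  obtain ⟨t, ⟨htC, htX⟩, _⟩ := hC.2.2 X hXC
  have second : FinInitSeg t s → ∃ u ∈ Cprime B C, IsInitSeg u X := by
    intro hts
    obtain ⟨hnX, _, hlt, hins⟩ := initSeg_insert_next hXC.2 hsX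
    refine ⟨insert (sInf (X \ ↑s)) s, Or.inr ⟨s, hsB, sInf (X \ ↑s), hXC.1 hnX,
      ⟨t, htC, hts⟩, fun x hx => hXC.1 (hsX.1 hx), hlt, rfl⟩, hins⟩
  rcases isInitSeg_comparable hsX htX with hst | hts
  · by_cases hse : s = t
    · exact second (hse ▸ hst)
    · exact ⟨t, Or.inl ⟨htC, s, hsB, hst, hse⟩, htX⟩
  · exact second hts

/-- `C'` is a block with base `∪C`, `C' ≤̇ B`, `B ∩ C' = ∅`,
hence `C' <̇ B`. -/
theorem Cprime_block (B C : Set (Finset ℕ)) (hB : IsBlock B) (hC : IsBlock C)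
    (hsub : blockBase C ⊆ blockBase B) :
    IsBlock (Cprime B C) ∧ blockBase (Cprime B C) = blockBase C ∧
      LeDot (Cprime B C) B ∧ B ∩ Cprime B C = ∅ ∧ LtDot (Cprime B C) B := by
  -- every element of Cprime has a (proper) initial segment in B
  have hInit : ∀ u ∈ Cprime B C, ∃ s ∈ B, FinInitSeg s u ∧ s ≠ u := by
    rintro u (⟨_, s, hsB, hsu, hsne⟩ | ⟨s, hsB, n, _, _, _, hlt, rfl⟩)
    · exact ⟨s, hsB, hsu, hsne⟩
    · refine ⟨s, hsB, finInitSeg_insert hlt, fun h => ?_⟩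
      have : n ∈ s := h ▸ Finset.mem_insert_self n s
      exact absurd (hlt n this) (lt_irrefl n)
  -- unique initial segments, for X ∈ [∪C]^ω
  have hUniq : ∀ X ∈ InfSub (blockBase C), ∃! u, u ∈ Cprime B C ∧ IsInitSeg u X := by
    intro X hXC
    have hXB : X ∈ InfSub (blockBase B) := ⟨hXC.1.trans hsub, hXC.2⟩
    obtain ⟨s, ⟨hsB, hsX⟩, _⟩ := hB.2.2 X hXB
    obtain ⟨t, ⟨htC, htX⟩, _⟩ := hC.2.2 X hXC
    obtain ⟨u, huC, huX⟩ := cprime_exists hB hC hsub hXC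
    refine ⟨u, ⟨huC, huX⟩, ?_⟩
    rintro v ⟨hvC, hvX⟩
    rcases cprime_char hB hC hXB hXC hsB hsX htC htX huC huX with ⟨hu1, hu2, hu3⟩ |
        ⟨hu1, hu2⟩ <;>
      rcases cprime_char hB hC hXB hXC hsB hsX htC htX hvC hvX with ⟨hv1, hv2, hv3⟩ |
        ⟨hv1, hv2⟩
    · rw [hv1, hu1]
    · exact absurd (Finset.Subset.antisymm hu2.1 hv2.1) hu3
    · exact absurd (Finset.Subset.antisymm hv2.1 hu2.1) hv3
    · rw [hv1, hu1]
  -- base equality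
  have hbase : blockBase (Cprime B C) = blockBase C := by
    apply Set.Subset.antisymm
    · intro n hn
      obtain ⟨u, hu, hnu⟩ := by
        simpa only [blockBase, Set.mem_iUnion, exists_prop] using hn
      rcases hu with ⟨huC, _⟩ | ⟨s, _, m, hmC, _, hssub, _, rfl⟩
      · exact mem_blockBase_of_mem huC hnu
      · rcases Finset.mem_insert.mp hnu with rfl | hns
        · exact hmC
        · exact hssub hns
    · intro n hn
      set X : Set ℕ := blockBase C \ Set.Iio n with hXdef
      have hXC : X ∈ InfSub (blockBase C) :=
        ⟨Set.diff_subset, hC.2.1.diff (Set.finite_Iio n)⟩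
      obtain ⟨u, ⟨huC, huX⟩, _⟩ := hUniq X hXC
      have hune : u.Nonempty := by
        rcases hInit u huC with ⟨s, hsB, _, _⟩
        rcases huC with ⟨huC', _⟩ | ⟨s', _, m, _, _, _, _, rfl⟩
        · exact hC.1 u huC'
        · exact ⟨m, Finset.mem_insert_self _ _⟩
      have hnX : n ∈ X := ⟨hn, by simp⟩
      have hnu : n ∈ u := by
        by_contra hnu
        obtain ⟨y, hy⟩ := hune
        have h1 := huX.2 n hnX hnu y hy
        have h2 : n ≤ y := by
          have := huX.1 hy
          simpa [hXdef] using this.2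
        omega
      exact mem_blockBase_of_mem huC hnu
  -- IsBlock
  have hblock : IsBlock (Cprime B C) := by
    refine ⟨?_, ?_, ?_⟩
    · rintro u (⟨huC', _⟩ | ⟨s', _, m, _, _, _, _, rfl⟩)
      · exact hC.1 u huC'
      · exact ⟨m, Finset.mem_insert_self _ _⟩
    · rw [hbase]; exact hC.2.1
    · rw [hbase]; exact hUniq
  -- disjointness
  have hdisj : B ∩ Cprime B C = ∅ := by
    ext u
    simp only [Set.mem_inter_iff, Set.mem_empty_iff_false, iff_false, not_and]
    intro huB huC
    obtain ⟨s, hsB, hsu, hsne⟩ := hInit u huC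
    exact hsne (block_antichain hB hsB huB hsu)
  -- LeDot
  have hle : LeDot (Cprime B C) B := by
    refine ⟨hbase ▸ hsub, fun u hu => ?_⟩
    obtain ⟨s, hsB, hsu, _⟩ := hInit u hu
    exact ⟨s, hsB, hsu⟩
  refine ⟨hblock, hbase, hle, hdisj, hle, ?_⟩
  -- Cprime nonempty, not ⊆ B
  intro hCB
  obtain ⟨u, hu, _⟩ := cprime_exists hB hC hsub
    (X := blockBase C) ⟨Set.Subset.refl _, hC.2.1⟩
  have : u ∈ B ∩ Cprime B C := ⟨hCB hu, hu⟩
  rw [hdisj] at this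
  exact this
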